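/- For every positive natural number D, every invertible D×D real matrix A, and all D×D SPD matrices Z₁, Z₂, the matrices A·Z₁·Aᵀ and A·Z₂·Aᵀ are SPD and the AIRM distance is affine invariant: δ(A·Z₁·Aᵀ, A·Z₂·Aᵀ) = δ(Z₁, Z₂). -/

import Mathlib

open MeasureTheory Matrix

variable {D : ℕ}

instance : MeasurableSpace (Matrix (Fin D) (Fin D) ℝ) :=
  (inferInstance : MeasurableSpace ((Fin D) → (Fin D) → ℝ))

/-- Apply a real function to the eigenvalues of a symmetric (Hermitian) real matrix
via a spectral decomposition. For non-Hermitian input the map is the identity. -/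
noncomputable def matFun (f : ℝ → ℝ) (Z : Matrix (Fin D) (Fin D) ℝ) :
    Matrix (Fin D) (Fin D) ℝ :=
  if h : Z.IsHermitian then
    (h.eigenvectorUnitary : Matrix (Fin D) (Fin D) ℝ) *
      Matrix.diagonal (fun i => f (h.eigenvalues i)) *
      star (h.eigenvectorUnitary : Matrix (Fin D) (Fin D) ℝ)
  else Z

/-- Matrix power `Z ^ s` for SPD `Z`: apply `t ↦ t ^ s` to the eigenvalues. -/
noncomputable def spdPow (Z : Matrix (Fin D) (Fin D) ℝ) (s : ℝ) :
    Matrix (Fin D) (Fin D) ℝ :=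
  matFun (fun t => Real.rpow t s) Z

/-- Matrix logarithm of an SPD matrix: apply `Real.log` to the eigenvalues. -/
noncomputable def spdLog (Z : Matrix (Fin D) (Fin D) ℝ) : Matrix (Fin D) (Fin D) ℝ :=
  matFun Real.log Z

/-- Matrix exponential of a real symmetric matrix: apply `Real.exp` to the eigenvalues. -/
noncomputable def symExp (S : Matrix (Fin D) (Fin D) ℝ) : Matrix (Fin D) (Fin D) ℝ :=
  matFun Real.exp S

/-- Frobenius norm. -/
noncomputable def frobNorm (A : Matrix (Fin D) (Fin D) ℝ) : ℝ :=
  Real.sqrt (∑ i, ∑ j, (A i j) ^ 2)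

/-- A real matrix is SPD if it is positive definite (hence symmetric). -/
def IsSPD (Z : Matrix (Fin D) (Fin D) ℝ) : Prop := Z.PosDef

/-- Affine-invariant Riemannian (AIRM) distance between SPD matrices. -/
noncomputable def airm (Z₁ Z₂ : Matrix (Fin D) (Fin D) ℝ) : ℝ :=
  frobNorm (spdLog (spdPow Z₁ (-(1:ℝ)/2) * Z₂ * spdPow Z₁ (-(1:ℝ)/2)))

/-- Weighted geometric mean `Z₁ #_γ Z₂`. -/
noncomputable def geoMean (Z₁ Z₂ : Matrix (Fin D) (Fin D) ℝ) (γ : ℝ) :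
    Matrix (Fin D) (Fin D) ℝ :=
  spdPow Z₁ ((1:ℝ)/2) *
    spdPow (spdPow Z₁ (-(1:ℝ)/2) * Z₂ * spdPow Z₁ (-(1:ℝ)/2)) γ *
    spdPow Z₁ ((1:ℝ)/2)

/-- `Gstar` is a Fréchet mean of the random SPD matrix `B`. -/
def IsFrechetMean {Ω : Type*} [MeasurableSpace Ω] (μ : Measure Ω)
    (B : Ω → Matrix (Fin D) (Fin D) ℝ) (Gstar : Matrix (Fin D) (Fin D) ℝ) : Prop :=
  IsSPD Gstar ∧
    ∀ Z : Matrix (Fin D) (Fin D) ℝ, IsSPD Z →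
      ∫ ω, airm Gstar (B ω) ^ 2 ∂μ ≤ ∫ ω, airm Z (B ω) ^ 2 ∂μ

/-! With `X = A Z₁ Aᵀ`, the matrix `U = X^{-1/2} A Z₁^{1/2}` is orthogonal, because
`U Uᵀ = X^{-1/2} X X^{-1/2} = 1`, and it conjugates `Z₁^{-1/2} Z₂ Z₁^{-1/2}` into
`X^{-1/2} (A Z₂ Aᵀ) X^{-1/2}`. The matrix logarithm commutes with orthogonal conjugation and the
Frobenius norm is invariant under it, so both distances coincide. -/

namespace Matrix

variable {n : Type*} [Fintype n] [DecidableEq n]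

theorem PosDef.mul_mul_transpose_of_isUnit {A Z : Matrix n n ℝ} (hA : IsUnit A)
    (hZ : Z.PosDef) : (A * Z * Aᵀ).PosDef := by
  simpa [star_eq_conjTranspose] using
    (IsUnit.posDef_star_left_conjugate_iff (isUnit_transpose A |>.mpr hA)).mpr hZ

theorem cfc_rpow_zero {Z : Matrix n n ℝ} (hZ : Z.IsHermitian) :
    cfc (fun x : ℝ => x ^ (0 : ℝ)) Z = 1 := by
  simp only [Real.rpow_zero]
  exact cfc_const_one ℝ Z

theorem cfc_rpow_one {Z : Matrix n n ℝ} (hZ : Z.IsHermitian) :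
    cfc (fun x : ℝ => x ^ (1 : ℝ)) Z = Z := by
  simp only [Real.rpow_one]
  exact cfc_id' ℝ Z

theorem PosDef.cfc_rpow_mul_cfc_rpow {Z : Matrix n n ℝ} (hZ : Z.PosDef) {s t r : ℝ}
    (hr : s + t = r) :
    cfc (fun x : ℝ => x ^ s) Z * cfc (fun x : ℝ => x ^ t) Z = cfc (fun x : ℝ => x ^ r) Z := by
  rw [← cfc_mul _ _ Z ((finite_spectrum Z).continuousOn _) ((finite_spectrum Z).continuousOn _)]
  refine cfc_congr fun x hx => hr ▸ (Real.rpow_add ?_ s t).symm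
  rw [hZ.1.spectrum_real_eq_range_eigenvalues] at hx
  obtain ⟨i, rfl⟩ := hx
  exact hZ.eigenvalues_pos i

theorem PosDef.cfc_rpow_neg_half_mul_self_mul {Z : Matrix n n ℝ} (hZ : Z.PosDef) :
    cfc (fun x : ℝ => x ^ (-(1 : ℝ) / 2)) Z * Z * cfc (fun x : ℝ => x ^ (-(1 : ℝ) / 2)) Z
      = 1 := by
  nth_rw 2 [← cfc_rpow_one hZ.1]
  rw [hZ.cfc_rpow_mul_cfc_rpow (r := (1 : ℝ) / 2) (by norm_num),
    hZ.cfc_rpow_mul_cfc_rpow (r := 0) (by norm_num), cfc_rpow_zero hZ.1]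

theorem star_cfc_self (f : ℝ → ℝ) (Z : Matrix n n ℝ) : star (cfc f Z) = cfc f Z :=
  (cfc_predicate f Z : IsSelfAdjoint _).star_eq

theorem IsHermitian.cfc_mul_mul_cfc (f : ℝ → ℝ) (Z : Matrix n n ℝ) {W : Matrix n n ℝ}
    (hW : W.IsHermitian) : (cfc f Z * W * cfc f Z).IsHermitian := by
  simpa only [star_cfc_self] using (hW.isSelfAdjoint.conjugate (cfc f Z)).isHermitian

theorem cfc_unitary_conj (f : ℝ → ℝ) {u : Matrix n n ℝ}
    (hu : u ∈ unitary (Matrix n n ℝ)) {Z : Matrix n n ℝ} (hZ : Z.IsHermitian) :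
    cfc f (u * Z * star u) = u * cfc f Z * star u := by
  have hφ : Continuous (Unitary.conjStarAlgAut ℝ (Matrix n n ℝ) ⟨u, hu⟩) :=
    (continuous_const.mul continuous_id).mul continuous_const
  exact (StarAlgHomClass.map_cfc (Unitary.conjStarAlgAut ℝ _ ⟨u, hu⟩) f Z
    ((finite_spectrum Z).continuousOn f) (hφa := hZ.isSelfAdjoint.conjugate u)).symm

theorem PosDef.exists_mem_unitary_whitened_conj {A Z₁ : Matrix n n ℝ} (hZ₁ : Z₁.PosDef)
    (hX : (A * Z₁ * star A).PosDef) (Z₂ : Matrix n n ℝ) :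
    ∃ U ∈ unitary (Matrix n n ℝ),
      cfc (fun x : ℝ => x ^ (-(1 : ℝ) / 2)) (A * Z₁ * star A) * (A * Z₂ * star A) *
          cfc (fun x : ℝ => x ^ (-(1 : ℝ) / 2)) (A * Z₁ * star A) =
        U * (cfc (fun x : ℝ => x ^ (-(1 : ℝ) / 2)) Z₁ * Z₂ *
          cfc (fun x : ℝ => x ^ (-(1 : ℝ) / 2)) Z₁) * star U := by
  set P := cfc (fun x : ℝ => x ^ (-(1 : ℝ) / 2)) (A * Z₁ * star A)
  set S := cfc (fun x : ℝ => x ^ (-(1 : ℝ) / 2)) Z₁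
  set Q := cfc (fun x : ℝ => x ^ ((1 : ℝ) / 2)) Z₁
  have hP : star P = P := star_cfc_self _ _
  have hQ : star Q = Q := star_cfc_self _ _
  have hQQ : Q * Q = Z₁ := by
    rw [hZ₁.cfc_rpow_mul_cfc_rpow (r := 1) (by norm_num), cfc_rpow_one hZ₁.1]
  have hQS : Q * S = 1 := by
    rw [hZ₁.cfc_rpow_mul_cfc_rpow (r := 0) (by norm_num), cfc_rpow_zero hZ₁.1]
  have hSQ : S * Q = 1 := by
    rw [hZ₁.cfc_rpow_mul_cfc_rpow (r := 0) (by norm_num), cfc_rpow_zero hZ₁.1]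
  refine ⟨P * A * Q, mem_unitaryGroup_iff.mpr ?_, ?_⟩
  · calc P * A * Q * star (P * A * Q) = P * (A * (Q * Q) * star A) * P := by
          simp only [star_mul, hP, hQ, Matrix.mul_assoc]
      _ = 1 := by rw [hQQ, hX.cfc_rpow_neg_half_mul_self_mul]
  · calc P * (A * Z₂ * star A) * P
        = P * A * (Q * S) * Z₂ * ((S * Q) * star A * P) := by
          simp only [hQS, hSQ, Matrix.mul_one, Matrix.one_mul, Matrix.mul_assoc]
      _ = P * A * Q * (S * Z₂ * S) * star (P * A * Q) := by
          simp only [star_mul, hP, hQ, Matrix.mul_assoc]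

end Matrix

theorem matFun_eq_cfc (f : ℝ → ℝ) {Z : Matrix (Fin D) (Fin D) ℝ} (hZ : Z.IsHermitian) :
    matFun f Z = cfc f Z := by
  rw [matFun, dif_pos hZ, hZ.cfc_eq f, Matrix.IsHermitian.cfc]
  rfl

theorem frobNorm_eq_sqrt_trace (M : Matrix (Fin D) (Fin D) ℝ) :
    frobNorm M = √(star M * M).trace := by
  simp only [frobNorm, trace, diag_apply, mul_apply, star_apply, sq]
  rw [Finset.sum_comm]
  rfl

theorem frobNorm_unitary_conj {u : Matrix (Fin D) (Fin D) ℝ}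
    (hu : u ∈ unitary (Matrix (Fin D) (Fin D) ℝ)) (M : Matrix (Fin D) (Fin D) ℝ) :
    frobNorm (u * M * star u) = frobNorm M := by
  have hu' : star u * u = 1 := Unitary.star_mul_self_of_mem hu
  have h : star (u * M * star u) * (u * M * star u) = u * (star M * M) * star u := by
    simp only [star_mul, star_star, Matrix.mul_assoc]
    rw [← Matrix.mul_assoc (star u) u, hu', Matrix.one_mul]
  rw [frobNorm_eq_sqrt_trace, frobNorm_eq_sqrt_trace, h, trace_mul_cycle, hu', Matrix.one_mul]

theorem airm_eq_frobNorm_cfc_log {Z₁ Z₂ : Matrix (Fin D) (Fin D) ℝ}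
    (hZ₁ : Z₁.PosDef) (hZ₂ : Z₂.IsHermitian) :
    airm Z₁ Z₂ = frobNorm (cfc Real.log (cfc (fun x : ℝ => x ^ (-(1 : ℝ) / 2)) Z₁ * Z₂ *
      cfc (fun x : ℝ => x ^ (-(1 : ℝ) / 2)) Z₁)) := by
  rw [airm, spdLog, spdPow, matFun_eq_cfc _ hZ₁.1, matFun_eq_cfc _ (hZ₂.cfc_mul_mul_cfc _ _)]
  rfl

theorem airm_affine_invariant_general
    (D : ℕ) (A : Matrix (Fin D) (Fin D) ℝ) (hA : IsUnit A)
    (Z₁ Z₂ : Matrix (Fin D) (Fin D) ℝ) (hZ₁ : IsSPD Z₁) (hZ₂ : IsSPD Z₂) :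
    IsSPD (A * Z₁ * Aᵀ) ∧ IsSPD (A * Z₂ * Aᵀ) ∧
      airm (A * Z₁ * Aᵀ) (A * Z₂ * Aᵀ) = airm Z₁ Z₂ := by
  have hX : (A * Z₁ * Aᵀ).PosDef := hZ₁.mul_mul_transpose_of_isUnit hA
  have hY : (A * Z₂ * Aᵀ).PosDef := hZ₂.mul_mul_transpose_of_isUnit hA
  refine ⟨hX, hY, ?_⟩
  have hAt : Aᵀ = star A := (conjTranspose_eq_transpose_of_trivial A).symm
  rw [hAt] at hX hY ⊢
  obtain ⟨U, hU, hconj⟩ := PosDef.exists_mem_unitary_whitened_conj hZ₁ hX Z₂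
  rw [airm_eq_frobNorm_cfc_log hX hY.1, airm_eq_frobNorm_cfc_log hZ₁ hZ₂.1, hconj,
    cfc_unitary_conj _ hU (hZ₂.1.cfc_mul_mul_cfc _ _), frobNorm_unitary_conj hU]

/-- Affine invariance of the AIRM distance under congruence by an invertible matrix. -/
theorem airm_affine_invariant
    (D : ℕ) (hD : 0 < D) (A : Matrix (Fin D) (Fin D) ℝ) (hA : IsUnit A)
    (Z₁ Z₂ : Matrix (Fin D) (Fin D) ℝ) (hZ₁ : IsSPD Z₁) (hZ₂ : IsSPD Z₂) :
    IsSPD (A * Z₁ * Aᵀ) ∧ IsSPD (A * Z₂ * Aᵀ) ∧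
      airm (A * Z₁ * Aᵀ) (A * Z₂ * Aᵀ) = airm Z₁ Z₂ :=
  airm_affine_invariant_general D A hA Z₁ Z₂ hZ₁ hZ₂
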